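/- For every integer n ≥ 1, ∑_{j=1}^{n} H_{j,1} H_{j,2}/j = (1/2) ( H_{n,1}^2 H_{n,2} − H_{n,4} + ∑_{j=1}^{n} H_{j,2}/j^2 + 2 ∑_{j=1}^{n} H_{j,1}/j^3 − ∑_{j=1}^{n} H_{j,1}^2/j^2 ). -/

import Mathlib

/-! Telescoping `H j 1 ^ 2 * H j 2` with `H (j - 1) 1 = H j 1 - 1/j` and `H (j - 1) 2 = H j 2 - 1/j²`
expresses `H n 1 ^ 2 * H n 2` as a sum over `j ≤ n` in which `H j 1 * H j 2 / j` occurs with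
coefficient `2`, next to the four sums of the right-hand side (`H n 4` being one of them);
solving for it gives the identity. -/

open Finset Filter Real Topology

/-- Generalized harmonic number `H (n, m) = ∑_{i=1}^{n} 1/i^m` as a real number. -/
noncomputable def H (n m : ℕ) : ℝ := ∑ i ∈ Finset.Icc 1 n, (1 : ℝ) / (i : ℝ) ^ m

/-- Apéry's constant `ζ(3) = ∑_{k=1}^{∞} 1/k³`. -/
noncomputable def zeta3 : ℝ := ∑' k : ℕ, 1 / ((k : ℝ) + 1) ^ 3

theorem H_succ (n m : ℕ) : H (n + 1) m = H n m + 1 / ((n : ℝ) + 1) ^ m := by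
  rw [H, sum_Icc_succ_top (by omega), ← H]
  push_cast
  rfl

theorem sq_H_one_mul_H_two_eq_sum (n : ℕ) :
    H n 1 ^ 2 * H n 2 = ∑ j ∈ Icc 1 n,
      (H j 1 ^ 2 / (j : ℝ) ^ 2 + 2 * (H j 1 * H j 2 / j) - 2 * (H j 1 / (j : ℝ) ^ 3)
        - H j 2 / (j : ℝ) ^ 2 + 1 / (j : ℝ) ^ 4) := by
  induction n with
  | zero => simp [H]
  | succ n ih =>
    rw [sum_Icc_succ_top (by omega), ← ih, H_succ, H_succ]
    push_cast
    field_simp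
    ring

theorem sum_H1_mul_H2_div_general (n : ℕ) :
    ∑ j ∈ Finset.Icc 1 n, H j 1 * H j 2 / (j : ℝ) =
      (1 / 2) * ((H n 1) ^ 2 * H n 2 - H n 4
        + (∑ j ∈ Finset.Icc 1 n, H j 2 / (j : ℝ) ^ 2)
        + 2 * (∑ j ∈ Finset.Icc 1 n, H j 1 / (j : ℝ) ^ 3)
        - (∑ j ∈ Finset.Icc 1 n, (H j 1) ^ 2 / (j : ℝ) ^ 2)) := by
  have htelescope := sq_H_one_mul_H_two_eq_sum n
  simp only [sum_add_distrib, sum_sub_distrib, ← mul_sum] at htelescope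
  have hH4 : H n 4 = ∑ j ∈ Icc 1 n, 1 / (j : ℝ) ^ 4 := rfl
  rw [hH4]
  linarith

theorem sum_H1_mul_H2_div (n : ℕ) (hn : 1 ≤ n) :
    ∑ j ∈ Finset.Icc 1 n, H j 1 * H j 2 / (j : ℝ) =
      (1 / 2) * ((H n 1) ^ 2 * H n 2 - H n 4
        + (∑ j ∈ Finset.Icc 1 n, H j 2 / (j : ℝ) ^ 2)
        + 2 * (∑ j ∈ Finset.Icc 1 n, H j 1 / (j : ℝ) ^ 3)
        - (∑ j ∈ Finset.Icc 1 n, (H j 1) ^ 2 / (j : ℝ) ^ 2)) :=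
  sum_H1_mul_H2_div_general n
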